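/- If G is a finite simple 2-connected chordal graph, then the Helly number of G with respect to Δ-convexity satisfies h_Δ(G) = max{2, α(G)}. -/

import Mathlib

variable {V : Type*}

/-- A set `S` is Δ-convex in `G` if every vertex adjacent to two adjacent vertices of `S`
belongs to `S`. -/
def DeltaConvex (G : SimpleGraph V) (S : Set V) : Prop :=
  ∀ ⦃u v w : V⦄, u ∈ S → v ∈ S → G.Adj u v → G.Adj w u → G.Adj w v → w ∈ S

/-- The Δ-convex hull of `S`: the smallest Δ-convex set containing `S`. -/
def deltaHull (G : SimpleGraph V) (S : Set V) : Set V :=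
  ⋂₀ {T : Set V | S ⊆ T ∧ DeltaConvex G T}

/-- `S` is Helly independent: the intersection of the hulls of the sets `S \ {a}`, `a ∈ S`,
is empty. -/
def HellyIndep (G : SimpleGraph V) (S : Set V) : Prop :=
  (⋂ a ∈ S, deltaHull G (S \ {a})) = ∅

/-- The Helly number of `G` w.r.t. Δ-convexity: the maximum cardinality of a Helly
independent subset of the vertex set. -/
noncomputable def hellyNumber (G : SimpleGraph V) : ℕ :=
  sSup {n : ℕ | ∃ S : Set V, HellyIndep G S ∧ S.ncard = n}

/-- `S` is Radon independent: no partition of `S` into two nonempty disjoint parts has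
intersecting hulls. -/
def RadonIndep (G : SimpleGraph V) (S : Set V) : Prop :=
  ¬ ∃ S₁ S₂ : Set V, S₁ ∪ S₂ = S ∧ Disjoint S₁ S₂ ∧ S₁.Nonempty ∧ S₂.Nonempty ∧
    (deltaHull G S₁ ∩ deltaHull G S₂).Nonempty

/-- The Radon number of `G` w.r.t. Δ-convexity. -/
noncomputable def radonNumber (G : SimpleGraph V) : ℕ :=
  sSup {n : ℕ | ∃ S : Set V, RadonIndep G S ∧ S.ncard = n}

/-- `S` is convexly independent: `a ∉ ⟨S \ {a}⟩` for every `a ∈ S`. -/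
def ConvIndep (G : SimpleGraph V) (S : Set V) : Prop :=
  ∀ a ∈ S, a ∉ deltaHull G (S \ {a})

/-- The rank of `G` w.r.t. Δ-convexity. -/
noncomputable def rankDelta (G : SimpleGraph V) : ℕ :=
  sSup {n : ℕ | ∃ S : Set V, ConvIndep G S ∧ S.ncard = n}

/-- The independence number: maximum cardinality of a set of pairwise non-adjacent
vertices. -/
noncomputable def alphaNum (G : SimpleGraph V) : ℕ :=
  sSup {n : ℕ | ∃ S : Set V, S.Pairwise (fun a b => ¬ G.Adj a b) ∧ S.ncard = n}

/-- `G` is 2-connected: at least 3 vertices, connected, and deleting any single vertex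
leaves a connected graph. -/
def TwoConnected (G : SimpleGraph V) : Prop :=
  3 ≤ Nat.card V ∧ G.Connected ∧ ∀ v : V, (G.induce {u : V | u ≠ v}).Connected

/-- `G` is chordal: every cycle of length at least 4 has a chord, i.e. an edge of `G`
joining two vertices of the cycle that is not an edge of the cycle. -/
def ChordalGraph (G : SimpleGraph V) : Prop :=
  ∀ (v : V) (c : G.Walk v v), c.IsCycle → 4 ≤ c.length →
    ∃ x y : V, x ∈ c.support ∧ y ∈ c.support ∧ G.Adj x y ∧ s(x, y) ∉ c.edges

/-- `B` induces a connected subgraph of `G` with at least two vertices and no cut vertex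
(so: an edge, or a 2-connected subgraph). -/
def NoCutSet (G : SimpleGraph V) (B : Set V) : Prop :=
  2 ≤ B.ncard ∧ (G.induce B).Connected ∧ ∀ v ∈ B, (G.induce (B \ {v})).Connected

/-- `B` is (the vertex set of) a block of `G`: a maximal 2-connected subgraph, where a
bridge together with its endpoints also counts as a block. -/
def IsBlock (G : SimpleGraph V) (B : Set V) : Prop :=
  NoCutSet G B ∧ ∀ B' : Set V, NoCutSet G B' → B ⊆ B' → B = B'

/-- The set `B` induces a complete subgraph of `G`. -/
def CompleteOn (G : SimpleGraph V) (B : Set V) : Prop :=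
  ∀ u ∈ B, ∀ v ∈ B, u ≠ v → G.Adj u v

/-! In a 2-connected chordal graph every Δ-convex set `H` containing an edge is the whole vertex
set. Otherwise, leaving `H` gives `c ~ b ~ w` with `c, b ∈ H` and `w ∉ H`, and since `G - b` is
connected there is a path from `b` through `w` to `c`. The cycle it closes with `cb` is filled in
by `H`: chords split it into shorter cycles, each closed by an edge of `H`, down to triangles,
where Δ-convexity applies.

So a set containing an edge has hull `V`. If a Helly-independent set `S` with `|S| ≥ 3` contained
an edge `uv`, a third vertex `b ∈ S` would lie in every `⟨S \ {a}⟩`: for `a ≠ b` since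
`b ∈ S \ {a}`, and `⟨S \ {b}⟩ = V`. Hence such sets are independent. Conversely every pair and
every nonempty independent set is Helly independent, because then all the sets `S \ {a}` are
Δ-convex. -/

open SimpleGraph Set

section Hull

variable {G : SimpleGraph V} {S : Set V}

theorem subset_deltaHull (G : SimpleGraph V) (S : Set V) : S ⊆ deltaHull G S :=
  fun _ hx _ hT => hT.1 hx

theorem deltaConvex_deltaHull (G : SimpleGraph V) (S : Set V) : DeltaConvex G (deltaHull G S) :=
  fun _ _ _ hu hv huv hwu hwv T hT => hT.2 (hu T hT) (hv T hT) huv hwu hwv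

theorem DeltaConvex.deltaHull_eq (hS : DeltaConvex G S) : deltaHull G S = S :=
  (sInter_subset_of_mem (S := {T | S ⊆ T ∧ DeltaConvex G T}) ⟨subset_rfl, hS⟩).antisymm
    (subset_deltaHull G S)

theorem deltaConvex_of_pairwise_not_adj (hS : S.Pairwise fun a b => ¬ G.Adj a b) :
    DeltaConvex G S :=
  fun _ _ _ hu hv huv _ _ => absurd huv (hS hu hv huv.ne)

end Hull

section Helly

variable {G : SimpleGraph V} {S : Set V}

theorem hellyIndep_of_forall_pairwise_not_adj (hne : S.Nonempty)
    (hS : ∀ a ∈ S, (S \ {a}).Pairwise fun u v => ¬ G.Adj u v) : HellyIndep G S := by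
  have hhull : ∀ a ∈ S, deltaHull G (S \ {a}) = S \ {a} := fun a ha =>
    (deltaConvex_of_pairwise_not_adj (hS a ha)).deltaHull_eq
  refine eq_empty_of_forall_notMem fun x hx => ?_
  rw [mem_iInter₂] at hx
  obtain ⟨a, ha⟩ := hne
  have hxS : x ∈ S := (hhull a ha ▸ hx a ha).1
  exact (hhull x hxS ▸ hx x hxS).2 rfl

theorem hellyIndep_of_pairwise_not_adj (hne : S.Nonempty)
    (hS : S.Pairwise fun a b => ¬ G.Adj a b) : HellyIndep G S :=
  hellyIndep_of_forall_pairwise_not_adj hne fun _ _ => hS.mono sdiff_subset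

theorem hellyIndep_pair {a b : V} (hab : a ≠ b) : HellyIndep G {a, b} := by
  refine hellyIndep_of_forall_pairwise_not_adj (insert_nonempty a {b}) fun c hc => ?_
  rcases hc with rfl | rfl
  · rw [pair_sdiff_left hab]
    exact pairwise_singleton _ _
  · rw [pair_sdiff_right hab]
    exact pairwise_singleton _ _

theorem HellyIndep.pairwise_not_adj
    (hG : ∀ ⦃T : Set V⦄ ⦃u v : V⦄, DeltaConvex G T → u ∈ T → v ∈ T → G.Adj u v → T = univ)
    (hS : HellyIndep G S) (hS3 : 2 < S.ncard) : S.Pairwise fun a b => ¬ G.Adj a b := by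
  intro u hu v hv _ huv
  obtain ⟨b, hbS, hbuv⟩ : (S \ {u, v}).Nonempty := by
    refine sdiff_nonempty.2 fun hsub => ?_
    have := (ncard_le_ncard hsub).trans (ncard_insert_le u {v})
    rw [ncard_singleton] at this
    omega
  refine eq_empty_iff_forall_notMem.1 hS b (mem_iInter₂.2 fun a _ => ?_)
  by_cases hab : a = b
  · subst hab
    have hmem : ∀ w ∈ ({u, v} : Set V), w ∈ deltaHull G (S \ {a}) := fun w hw =>
      subset_deltaHull G _ ⟨hw.elim (· ▸ hu) (· ▸ hv), fun h => hbuv (h ▸ hw)⟩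
    rw [hG (deltaConvex_deltaHull G _) (hmem u (by simp)) (hmem v (by simp)) huv]
    trivial
  · exact subset_deltaHull G _ ⟨hbS, Ne.symm hab⟩

theorem bddAbove_setOf_ncard [Finite V] (P : Set V → Prop) :
    BddAbove {n | ∃ S : Set V, P S ∧ S.ncard = n} :=
  ⟨Nat.card V, by rintro _ ⟨S, -, rfl⟩; exact ncard_le_card S⟩

theorem hellyNumber_eq_max_two_alphaNum [Finite V] (hV : 2 ≤ Nat.card V)
    (hG : ∀ ⦃T : Set V⦄ ⦃u v : V⦄, DeltaConvex G T → u ∈ T → v ∈ T → G.Adj u v → T = univ) :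
    hellyNumber G = max 2 (alphaNum G) := by
  have : Nontrivial V := Finite.one_lt_card_iff_nontrivial.1 hV
  obtain ⟨a, b, hab⟩ := exists_pair_ne V
  have htwo : 2 ∈ {n | ∃ S : Set V, HellyIndep G S ∧ S.ncard = n} :=
    ⟨{a, b}, hellyIndep_pair hab, ncard_pair hab⟩
  apply le_antisymm
  · refine csSup_le ⟨2, htwo⟩ ?_
    rintro _ ⟨S, hS, rfl⟩
    by_cases hS2 : S.ncard ≤ 2
    · exact le_max_of_le_left hS2
    · exact le_max_of_le_right <|
        le_csSup (bddAbove_setOf_ncard _) ⟨S, hS.pairwise_not_adj hG (by omega), rfl⟩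
  · refine max_le (le_csSup (bddAbove_setOf_ncard _) htwo) ?_
    obtain ⟨S, hS, hcard⟩ : alphaNum G ∈ {n | ∃ S : Set V,
        S.Pairwise (fun a b => ¬ G.Adj a b) ∧ S.ncard = n} :=
      Nat.sSup_mem ⟨0, ∅, pairwise_empty _, ncard_empty V⟩ (bddAbove_setOf_ncard _)
    rcases S.eq_empty_or_nonempty with rfl | hne
    · simp [← hcard]
    · rw [← hcard]
      exact le_csSup (bddAbove_setOf_ncard _) ⟨S, hellyIndep_of_pairwise_not_adj hne hS, rfl⟩

end Helly

namespace SimpleGraph.Walk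

variable {G : SimpleGraph V} {x y a b : V}

theorem mem_edges_of_length_eq_one : ∀ {p : G.Walk x y}, p.length = 1 → s(x, y) ∈ p.edges
  | .nil, h => absurd h (by simp)
  | .cons _ .nil, _ => by simp
  | .cons _ (.cons _ _), h => by simp at h

theorem exists_eq_append_append {p : G.Walk x y} (ha : a ∈ p.support) (hb : b ∈ p.support) :
    ∃ (a' b' : V) (p₁ : G.Walk x a') (p₂ : G.Walk a' b') (p₃ : G.Walk b' y),
      s(a', b') = s(a, b) ∧ p = p₁.append (p₂.append p₃) := by
  obtain ⟨q, r, rfl⟩ := p.mem_support_iff_exists_append.1 ha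
  rcases (mem_support_append_iff q r).1 hb with hb | hb
  · obtain ⟨q₁, q₂, rfl⟩ := q.mem_support_iff_exists_append.1 hb
    exact ⟨b, a, q₁, q₂, r, Sym2.eq_swap, (append_assoc _ _ _).symm⟩
  · obtain ⟨r₁, r₂, rfl⟩ := r.mem_support_iff_exists_append.1 hb
    exact ⟨a, b, q, r₁, r₂, rfl, rfl⟩

theorem IsPath.append_cons_of_append {p₁ : G.Walk x a} {p₂ : G.Walk a b} {p₃ : G.Walk b y}
    (hp : (p₁.append (p₂.append p₃)).IsPath) (hab : G.Adj a b) :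
    (p₁.append (p₃.cons hab)).IsPath := by
  rw [isPath_def] at hp ⊢
  refine hp.sublist ?_
  rw [support_append, support_append, support_cons, List.tail_cons, tail_support_append]
  refine List.Sublist.append_left ?_ _
  conv_lhs => rw [← cons_tail_support p₃]
  exact (List.singleton_sublist.2 (end_mem_tail_support_of_ne hab.ne p₂)).append_right _

theorem exists_adj_adj_of_mem_of_notMem {H : Set V} {c w : V} (p : G.Walk b w)
    (hcb : G.Adj c b) (hc : c ∈ H) (hb : b ∈ H) (hw : w ∉ H) :
    ∃ c b w, c ∈ H ∧ b ∈ H ∧ w ∉ H ∧ G.Adj c b ∧ G.Adj b w := by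
  induction p generalizing c with
  | nil => exact absurd hb hw
  | cons hbx p ih =>
    rename_i x _
    by_cases hx : x ∈ H
    · exact ih hbx hb hx hw
    · exact ⟨c, _, x, hc, hb, hx, hcb, hbx⟩

end SimpleGraph.Walk

section Chordal

open SimpleGraph.Walk

variable {G : SimpleGraph V} {H : Set V} {x y : V}

theorem ChordalGraph.exists_isChord_of_isPath (hch : ChordalGraph G) {p : G.Walk x y}
    (hp : p.IsPath) (hxy : G.Adj x y) (h3 : 3 ≤ p.length) :
    ∃ u v, p.IsChord s(u, v) ∧ s(u, v) ≠ s(x, y) := by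
  have hcyc : (cons hxy.symm p).IsCycle := by
    refine (cons_isCycle_iff p hxy.symm).2 ⟨hp, fun h => ?_⟩
    have := hp.length_eq_one_of_mem_edges (Sym2.eq_swap ▸ h)
    omega
  obtain ⟨u, v, hu, hv, huv, hne⟩ := hch y _ hcyc (by simp only [length_cons]; omega)
  rw [support_cons, List.mem_cons] at hu hv
  rw [edges_cons, List.mem_cons, not_or] at hne
  refine ⟨u, v, isChord_sym2Mk.2 ⟨huv, hne.2, ?_, ?_⟩, fun h => hne.1 (h.trans Sym2.eq_swap)⟩
  · exact hu.elim (· ▸ p.end_mem_support) id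
  · exact hv.elim (· ▸ p.end_mem_support) id

theorem DeltaConvex.support_subset_of_length_lt_three (hH : DeltaConvex G H) (p : G.Walk x y)
    (hxy : G.Adj x y) (hx : x ∈ H) (hy : y ∈ H) (h3 : p.length < 3) : ∀ z ∈ p.support, z ∈ H :=
  match p, h3 with
  | .nil, _ => by simpa using hx
  | .cons _ .nil, _ => by simp [hx, hy]
  | .cons hxz (.cons hzy .nil), _ => by simp [hx, hy, hH hx hy hxy hxz.symm hzy]
  | .cons _ (.cons _ (.cons _ _)), h3 => by simp only [length_cons] at h3; omega

/-- A chord `ab` splits the cycle closed by `xy` into two shorter ones, closed by `xy` and by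
`ab`; the first puts `a, b` in `H`, and then the second applies. -/
theorem DeltaConvex.support_subset_of_isPath (hch : ChordalGraph G) (hH : DeltaConvex G H)
    (p : G.Walk x y) (hp : p.IsPath) (hxy : G.Adj x y) (hx : x ∈ H) (hy : y ∈ H) :
    ∀ z ∈ p.support, z ∈ H := by
  induction hn : p.length using Nat.strong_induction_on generalizing x y with
  | _ n ih =>
  rcases Nat.lt_or_ge n 3 with h3 | h3
  · exact hH.support_subset_of_length_lt_three p hxy hx hy (hn ▸ h3)
  obtain ⟨u, v, hchord, hne⟩ := hch.exists_isChord_of_isPath hp hxy (hn ▸ h3)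
  obtain ⟨huv, hnotin, hu, hv⟩ := isChord_sym2Mk.1 hchord
  obtain ⟨a, b, p₁, p₂, p₃, heq, rfl⟩ := exists_eq_append_append hu hv
  rw [← heq] at hnotin hne
  have hab : G.Adj a b := G.mem_edgeSet.1 (heq ▸ huv)
  have hp₂ : p₂.IsPath := hp.of_append_right.of_append_left
  have hq := hp.append_cons_of_append hab
  simp only [length_append] at hn
  have h₂0 : p₂.length ≠ 0 := fun h => hab.ne (eq_of_length_eq_zero h)
  have h₂1 : p₂.length ≠ 1 := fun h =>
    hnotin (by simp [edges_append, mem_edges_of_length_eq_one h])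
  have h₁₃ : p₁.length + p₃.length ≠ 0 := fun h => by
    obtain rfl := eq_of_length_eq_zero (p := p₁) (by omega)
    obtain rfl := eq_of_length_eq_zero (p := p₃) (by omega)
    exact hne rfl
  have hqH := ih _ (by simp only [length_append, length_cons]; omega) _ hq hxy hx hy rfl
  have hbH : b ∈ H := hqH b (by simp)
  have haH : a ∈ H := hqH a (by simp)
  have hp₂H := ih _ (by omega) _ hp₂ hab haH hbH rfl
  intro z hz
  simp only [mem_support_append_iff] at hz hqH
  rcases hz with hz | hz | hz
  · exact hqH z (.inl hz)
  · exact hp₂H z hz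
  · exact hqH z (.inr (by simp [hz]))

end Chordal

section TwoConnected

variable {G : SimpleGraph V} {H : Set V}

theorem TwoConnected.exists_isPath_notMem_support (h2 : TwoConnected G) {b u v : V}
    (hu : u ≠ b) (hv : v ≠ b) : ∃ q : G.Walk u v, q.IsPath ∧ b ∉ q.support := by
  classical
  let f := Embedding.induce (G := G) {x | x ≠ b}
  have hf : ∀ {x y} (r : (G.induce {x | x ≠ b}).Walk x y), b ∉ (r.map f.toHom).support := by
    intro x y r hb
    rw [Walk.support_map, List.mem_map] at hb
    obtain ⟨z, -, hz⟩ := hb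
    exact z.2 hz
  obtain ⟨q⟩ := (h2.2.2 b).preconnected ⟨u, hu⟩ ⟨v, hv⟩
  exact ⟨q.bypass.map f.toHom, q.bypass_isPath.map f.injective, hf _⟩

theorem DeltaConvex.eq_univ_of_adj (h2 : TwoConnected G) (hch : ChordalGraph G)
    (hH : DeltaConvex G H) {u v : V} (hu : u ∈ H) (hv : v ∈ H) (huv : G.Adj u v) : H = univ := by
  by_contra hne
  obtain ⟨w₀, hw₀⟩ := (ne_univ_iff_exists_notMem H).1 hne
  obtain ⟨p⟩ := h2.2.1.preconnected v w₀
  obtain ⟨c, b, w, hc, hb, hw, hcb, hbw⟩ := p.exists_adj_adj_of_mem_of_notMem huv hu hv hw₀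
  obtain ⟨q, hq, hbq⟩ := h2.exists_isPath_notMem_support (ne_of_mem_of_not_mem hb hw).symm hcb.ne
  exact hw (hH.support_subset_of_isPath hch (q.cons hbw) ((Walk.cons_isPath_iff _ _).2 ⟨hq, hbq⟩)
    hcb.symm hb hc w (by simp))

end TwoConnected

/-- If `G` is a finite simple 2-connected chordal graph, then
`h_Δ(G) = max {2, α(G)}`. -/
theorem stmt_5 {V : Type*} [Fintype V] (G : SimpleGraph V)
    (h2 : TwoConnected G) (hch : ChordalGraph G) :
    hellyNumber G = max 2 (alphaNum G) :=
  hellyNumber_eq_max_two_alphaNum (by have := h2.1; omega)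
    fun _ _ _ hT hu hv huv => hT.eq_univ_of_adj h2 hch hu hv huv
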